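/- arXiv:2312.07637 — 9 statements merged into one kernel-verified Lean document; each statement's English description precedes it below -/
import Mathlib

section
/- For any extensive form game G, any set of outcomes X with X ⊊ Ω(G), and any outcome w ∈ X, there exist a unique agent a and a unique X-achievement point n by agent a such that w ⪯ n. -/
/-- An extensive form game: a nonempty finite rooted tree. Nodes are represented as
positions, i.e. lists of child indices with the *head* being the most recent step,
so the root is `[]` and the parent of `i :: t` is `t`. Each node carries an agent
label (meaningful on non-leaf nodes) and a set of propositional variables
(meaningful on leaf nodes, the outcomes). -/
structure Game (Agent PropVar : Type) where
  Node : Set (List ℕ)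
  root_mem : [] ∈ Node
  downward : ∀ (i : ℕ) (t : List ℕ), i :: t ∈ Node → t ∈ Node
  finite : Node.Finite
  label : List ℕ → Agent
  leafLabel : List ℕ → Set PropVar

namespace Game

variable {Agent PropVar : Type}

/-- A leaf node (outcome) of the game. -/
def IsOutcome (G : Game Agent PropVar) (w : List ℕ) : Prop :=
  w ∈ G.Node ∧ ∀ i : ℕ, i :: w ∉ G.Node

/-- The set `Ω(G)` of outcomes (leaf nodes) of the game. -/
def outcomes (G : Game Agent PropVar) : Set (List ℕ) := {w | G.IsOutcome w}

/-- `w ⪯ n`: node `n` lies on the simple path (including endpoints) from the root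
to `w`; in the position representation this means `n` is a suffix of `w`. -/
def below (w n : List ℕ) : Prop := n <:+ w

/-- A non-root node `n` is an `X`-achievement point by agent `a` if (1) its parent is
labelled with `a`, (2) some outcome `w ⪯ parent(n)` is not in `X`, and (3) every
outcome `w ⪯ n` is in `X`. -/
def AchievePoint (G : Game Agent PropVar) (X : Set (List ℕ)) (a : Agent) (n : List ℕ) : Prop :=
  ∃ (i : ℕ) (t : List ℕ), n = i :: t ∧ n ∈ G.Node ∧ G.label t = a ∧
    (∃ w ∈ G.outcomes, t <:+ w ∧ w ∉ X) ∧
    (∀ w ∈ G.outcomes, n <:+ w → w ∈ X)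

/-- `win_a(X)`: the minimal set of nodes containing `X`, containing every non-leaf
node labelled `a` with at least one child in the set, and containing every non-leaf
node not labelled `a` all of whose children are in the set. -/
inductive Win (G : Game Agent PropVar) (a : Agent) (X : Set (List ℕ)) : List ℕ → Prop
  | mem (w : List ℕ) (hw : w ∈ X) : Win G a X w
  | own (n : List ℕ) (hn : n ∈ G.Node) (hl : G.label n = a) (i : ℕ)
      (hi : i :: n ∈ G.Node) (h : Win G a X (i :: n)) : Win G a X n
  | other (n : List ℕ) (hn : n ∈ G.Node) (hl : G.label n ≠ a)
      (hne : ∃ i : ℕ, i :: n ∈ G.Node)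
      (h : ∀ i : ℕ, i :: n ∈ G.Node → Win G a X (i :: n)) : Win G a X n

/-- The semantic counterfactual-responsibility operator on sets of outcomes:
`Cset a X` is the set of outcomes `w ∈ X` such that some node `n` with `w ⪯ n`
belongs to `win_a(Ω(G) ∖ X)`. -/
def Cset (G : Game Agent PropVar) (a : Agent) (X : Set (List ℕ)) : Set (List ℕ) :=
  {w | w ∈ X ∧ ∃ n : List ℕ, n <:+ w ∧ G.Win a (G.outcomes \ X) n}

/-- The semantic seeing-to-it-responsibility operator on sets of outcomes:
`Sset a X` is the set of outcomes `w` such that (a) every node `n` with `w ⪯ n`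
belongs to `win_a(X)` and (b) there is an `X`-achievement point `n` by agent `a`
with `w ⪯ n`. -/
def Sset (G : Game Agent PropVar) (a : Agent) (X : Set (List ℕ)) : Set (List ℕ) :=
  {w | w ∈ G.outcomes ∧ (∀ n : List ℕ, n <:+ w → G.Win a X n) ∧
    ∃ n : List ℕ, G.AchievePoint X a n ∧ n <:+ w}

end Game

/-- The language `Φ`: `φ ::= p | ¬φ | φ∧φ | C_a φ | S_a φ`. -/
inductive Formula (Agent PropVar : Type) where
  | var : PropVar → Formula Agent PropVar
  | neg : Formula Agent PropVar → Formula Agent PropVar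
  | and : Formula Agent PropVar → Formula Agent PropVar → Formula Agent PropVar
  | C : Agent → Formula Agent PropVar → Formula Agent PropVar
  | S : Agent → Formula Agent PropVar → Formula Agent PropVar

namespace Game

variable {Agent PropVar : Type}

/-- The truth set `⟦φ⟧ ⊆ Ω(G)` of a formula. -/
def truth (G : Game Agent PropVar) : Formula Agent PropVar → Set (List ℕ)
  | .var p => {w | w ∈ G.outcomes ∧ p ∈ G.leafLabel w}
  | .neg φ => G.outcomes \ G.truth φ
  | .and φ ψ => G.truth φ ∩ G.truth ψ
  | .C a φ => G.Cset a (G.truth φ)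
  | .S a φ => G.Sset a (G.truth φ)

/-- The truth set of the `i`-th order counterfactual gap formula
`G^c_0(φ) := φ`, `G^c_{i+1}(φ) := G^c_i(φ) ∧ ⋀_{a∈𝒜} ¬C_a G^c_i(φ)`. -/
def gapCIter (G : Game Agent PropVar) (φ : Formula Agent PropVar) : ℕ → Set (List ℕ)
  | 0 => G.truth φ
  | i + 1 => G.gapCIter φ i ∩ ⋂ a : Agent, (G.outcomes \ G.Cset a (G.gapCIter φ i))

/-- The truth set of the `i`-th order combined gap formula
`G^{c,s}_0(φ) := φ`,
`G^{c,s}_{i+1}(φ) := G^{c,s}_i(φ) ∧ ⋀_{a∈𝒜} ¬C_a G^{c,s}_i(φ) ∧ ⋀_{a∈𝒜} ¬S_a G^{c,s}_i(φ)`. -/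
def gapCSIter (G : Game Agent PropVar) (φ : Formula Agent PropVar) : ℕ → Set (List ℕ)
  | 0 => G.truth φ
  | i + 1 => G.gapCSIter φ i ∩ (⋂ a : Agent, (G.outcomes \ G.Cset a (G.gapCSIter φ i)))
      ∩ (⋂ a : Agent, (G.outcomes \ G.Sset a (G.gapCSIter φ i)))

end Game

/-- `φ` contains no occurrence of the modality `C`. -/
def Formula.noC {Agent PropVar : Type} : Formula Agent PropVar → Prop
  | .var _ => True
  | .neg φ => φ.noC
  | .and φ ψ => φ.noC ∧ ψ.noC
  | .C _ _ => False
  | .S _ φ => φ.noC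

/-- `φ` contains no occurrence of the modality `S`. -/
def Formula.noS {Agent PropVar : Type} : Formula Agent PropVar → Prop
  | .var _ => True
  | .neg φ => φ.noS
  | .and φ ψ => φ.noS ∧ ψ.noS
  | .C _ φ => φ.noS
  | .S _ _ => False


namespace Game

variable {Agent PropVar : Type}

/-- Suffix of a node is a node. -/
lemma mem_of_suffix (G : Game Agent PropVar) {n w : List ℕ} (h : n <:+ w)
    (hw : w ∈ G.Node) : n ∈ G.Node := by
  obtain ⟨l, rfl⟩ := h
  induction l with
  | nil => exact hw
  | cons a l ih => exact ih (G.downward a _ hw)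

/-- An outcome below a leaf equals the leaf. -/
lemma eq_of_outcome_suffix (G : Game Agent PropVar) {w w' : List ℕ}
    (hw : G.IsOutcome w) (hw' : w' ∈ G.Node) (h : w <:+ w') : w' = w := by
  obtain ⟨l, rfl⟩ := h
  suffices hl : l = [] by simp [hl]
  induction l with
  | nil => rfl
  | cons a l ih =>
    have h1 : l ++ w ∈ G.Node := G.downward a _ hw'
    have := ih h1
    subst this
    exact absurd hw' (hw.2 a)

end Game

/-- For any extensive form game `G`, any set of outcomes `X ⊊ Ω(G)`,
and any outcome `w ∈ X`, there exist a unique agent `a` and a unique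
`X`-achievement point `n` by agent `a` such that `w ⪯ n`. -/
theorem achievement_point_exists_unique {Agent PropVar : Type}
    (G : Game Agent PropVar) (X : Set (List ℕ)) (hX : X ⊂ G.outcomes)
    (w : List ℕ) (hw : w ∈ X) :
    ∃! an : Agent × List ℕ, G.AchievePoint X an.1 an.2 ∧ an.2 <:+ w := by
  have hwout : w ∈ G.outcomes := hX.subset hw
  -- P n : every outcome below n is in X
  set P : List ℕ → Prop := fun n => ∀ w' ∈ G.outcomes, n <:+ w' → w' ∈ X with hP
  have hPw : P w := by
    intro w' hw' hsuf
    rw [G.eq_of_outcome_suffix hwout hw'.1 hsuf]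
    exact hw
  have hPnil : ¬ P [] := by
    intro h
    obtain ⟨w0, hw0o, hw0x⟩ := Set.exists_of_ssubset hX
    exact hw0x (h w0 hw0o List.nil_suffix)
  -- existence of a threshold
  have key : ∀ v : List ℕ, v <:+ w → P v →
      ∃ i t, (i :: t) <:+ v ∧ ¬ P t ∧ P (i :: t) := by
    intro v
    induction v with
    | nil => intro _ hPv; exact absurd hPv hPnil
    | cons i t ih =>
      intro hsuf hPv
      by_cases hPt : P t
      · obtain ⟨i', t', h1, h2, h3⟩ :=
          ih ((List.suffix_cons i t).trans hsuf) hPt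
        exact ⟨i', t', h1.trans (List.suffix_cons i t), h2, h3⟩
      · exact ⟨i, t, List.suffix_refl _, hPt, hPv⟩
  obtain ⟨i, t, hnw, hPt, hPn⟩ := key w (List.suffix_refl w) hPw
  simp only [hP] at hPt; push_neg at hPt
  obtain ⟨w0, hw0o, hw0s, hw0x⟩ := hPt
  refine ⟨(G.label t, i :: t), ⟨⟨i, t, rfl,
      G.mem_of_suffix hnw hwout.1, rfl, ⟨w0, hw0o, hw0s, hw0x⟩, hPn⟩, hnw⟩, ?_⟩
  -- uniqueness
  rintro ⟨a', n'⟩ ⟨⟨i', t', rfl, hn'mem, hlab, ⟨w1, hw1o, hw1s, hw1x⟩, hPn'⟩, hn'w⟩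
  have hcomp := List.suffix_or_suffix_of_suffix hn'w hnw
  have heq : (i' : ℕ) :: t' = i :: t := by
    rcases hcomp with h | h
    · rcases (List.suffix_cons_iff.mp h) with h | h
      · exact h
      · exact absurd (hPn' w0 hw0o (h.trans hw0s)) hw0x
    · rcases (List.suffix_cons_iff.mp h) with h | h
      · exact h.symm
      · exact absurd (hPn w1 hw1o (h.trans hw1s)) hw1x
  obtain ⟨hi, ht⟩ : i' = i ∧ t' = t := by simpa using heq
  subst hi; subst ht
  simp only [Prod.mk.injEq]
  exact ⟨hlab.symm, trivial⟩
end

section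
/- Suppose the agent set contains at least three distinct agents a, b, c and the set of propositional variables contains a variable p. Then the formula C_a p is not semantically equivalent to any formula in the language Φ that contains no occurrence of the modality C. That is, for every formula ψ ∈ Φ built only from propositional variables, ¬, ∧, and the modalities S_g (g an agent), there exists an extensive form game in which ⟦C_a p⟧ ≠ ⟦ψ⟧. -/
/- ### Auxiliary development for the undefinability proof -/

namespace CUndef

open Game

variable {Agent PropVar : Type}

/-- Node list of the witness tree. -/
def nodeL : List (List ℕ) := [[], [0], [1], [0,0], [1,0], [0,1], [1,1]]

/-- The witness game, parametrized by the labels of the root, of `[0]`, and of `[1]`. -/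
def Gm (x y z : Agent) : Game Agent PropVar where
  Node := {l | l ∈ nodeL}
  root_mem := by simp [nodeL]
  downward := by
    intro i t h
    simp only [nodeL, Set.mem_setOf_eq, List.mem_cons, List.mem_singleton,
      List.not_mem_nil, or_false] at h ⊢
    rcases h with h|h|h|h|h|h|h <;> simp_all
  finite := (List.finite_toSet nodeL)
  label := fun n => if n = [] then x else if n = [0] then y else z
  leafLabel := fun n => if n = [1,0] ∨ n = [1,1] then Set.univ else ∅

@[simp] lemma mem_Node {x y z : Agent} {l : List ℕ} :
    l ∈ (Gm x y z : Game Agent PropVar).Node ↔ l ∈ nodeL := Iff.rfl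

@[simp] lemma label_Gm {x y z : Agent} (n : List ℕ) :
    (Gm x y z : Game Agent PropVar).label n
      = if n = [] then x else if n = [0] then y else z := rfl

@[simp] lemma leafLabel_Gm {x y z : Agent} (n : List ℕ) :
    (Gm x y z : Game Agent PropVar).leafLabel n
      = if n = [1,0] ∨ n = [1,1] then (Set.univ : Set PropVar) else ∅ := rfl

/-- The outcome set of the witness tree. -/
def Om : Set (List ℕ) := {[0,0],[1,0],[0,1],[1,1]}

/-- The truth set of every propositional variable in the witness games. -/
def Pset : Set (List ℕ) := {[1,0],[1,1]}

lemma outcomes_eq (x y z : Agent) : (Gm x y z : Game Agent PropVar).outcomes = Om := by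
  ext w
  constructor
  · rintro ⟨h1, h2⟩
    simp only [mem_Node, nodeL, List.mem_cons, List.not_mem_nil, or_false] at h1
    rcases h1 with rfl|rfl|rfl|rfl|rfl|rfl|rfl
    · exact absurd (h2 0) (by simp [nodeL])
    · exact absurd (h2 0) (by simp [nodeL])
    · exact absurd (h2 0) (by simp [nodeL])
    all_goals simp [Om]
  · intro hw
    simp only [Om, Set.mem_insert_iff, Set.mem_singleton_iff] at hw
    rcases hw with rfl|rfl|rfl|rfl <;>
      exact ⟨by simp [nodeL], fun i => by simp [nodeL]⟩

/-- Win at a leaf. -/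
lemma win_leaf (G : Game Agent PropVar) (g : Agent) (X : Set (List ℕ)) (n : List ℕ)
    (h : ∀ i : ℕ, i :: n ∉ G.Node) : G.Win g X n ↔ n ∈ X := by
  constructor
  · intro hw
    cases hw with
    | mem _ hw => exact hw
    | own _ _ _ i hi _ => exact absurd hi (h i)
    | other _ _ _ hne _ => obtain ⟨i, hi⟩ := hne; exact absurd hi (h i)
  · exact Win.mem n

/-- Win at a binary node. -/
lemma win_binary (G : Game Agent PropVar) (g : Agent) (X : Set (List ℕ)) (n : List ℕ)
    (hn : n ∈ G.Node) (hch : ∀ i : ℕ, i :: n ∈ G.Node ↔ (i = 0 ∨ i = 1)) :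
    G.Win g X n ↔ n ∈ X ∨ (G.label n = g ∧ (G.Win g X (0 :: n) ∨ G.Win g X (1 :: n)))
      ∨ (G.label n ≠ g ∧ G.Win g X (0 :: n) ∧ G.Win g X (1 :: n)) := by
  constructor
  · intro hw
    cases hw with
    | mem _ hw => exact Or.inl hw
    | own _ _ hl i hi h =>
        rcases (hch i).1 hi with rfl | rfl
        · exact Or.inr (Or.inl ⟨hl, Or.inl h⟩)
        · exact Or.inr (Or.inl ⟨hl, Or.inr h⟩)
    | other _ _ hl _ h =>
        exact Or.inr (Or.inr ⟨hl, h 0 ((hch 0).2 (Or.inl rfl)), h 1 ((hch 1).2 (Or.inr rfl))⟩)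
  · rintro (hw | ⟨hl, (h|h)⟩ | ⟨hl, h0, h1⟩)
    · exact Win.mem n hw
    · exact Win.own n hn hl 0 ((hch 0).2 (Or.inl rfl)) h
    · exact Win.own n hn hl 1 ((hch 1).2 (Or.inr rfl)) h
    · refine Win.other n hn hl ⟨0, (hch 0).2 (Or.inl rfl)⟩ (fun i hi => ?_)
      rcases (hch i).1 hi with rfl | rfl
      exacts [h0, h1]

lemma hch_nil (x y z : Agent) :
    ∀ i : ℕ, i :: ([] : List ℕ) ∈ (Gm x y z : Game Agent PropVar).Node ↔ (i = 0 ∨ i = 1) := by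
  intro i; simp [nodeL]
lemma hch_zero (x y z : Agent) :
    ∀ i : ℕ, i :: ([0] : List ℕ) ∈ (Gm x y z : Game Agent PropVar).Node ↔ (i = 0 ∨ i = 1) := by
  intro i; simp [nodeL]
lemma hch_one (x y z : Agent) :
    ∀ i : ℕ, i :: ([1] : List ℕ) ∈ (Gm x y z : Game Agent PropVar).Node ↔ (i = 0 ∨ i = 1) := by
  intro i; simp [nodeL]

lemma leaf_no_child (x y z : Agent) {u v : ℕ} (h : [u,v] ∈ nodeL) :
    ∀ i : ℕ, i :: [u, v] ∉ (Gm x y z : Game Agent PropVar).Node := by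
  intro i; simp [nodeL]

/-- Win at each leaf of the witness tree reduces to membership. -/
lemma win_leaf' (x y z g : Agent) (X : Set (List ℕ)) (u v : ℕ) :
    (Gm x y z : Game Agent PropVar).Win g X [u, v] ↔ [u, v] ∈ X :=
  win_leaf _ g X _ (fun i => by simp [nodeL])

/-- The invariant family. -/
def Finv (X : Set (List ℕ)) : Prop :=
  X ⊆ Om ∧ ([0,0] ∈ X ↔ [0,1] ∈ X) ∧ ([1,0] ∈ X ↔ [1,1] ∈ X)

lemma notMem_internal {X : Set (List ℕ)} (hX : X ⊆ Om) :
    [] ∉ X ∧ [0] ∉ X ∧ [1] ∉ X :=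
  ⟨fun h => by simpa [Om] using hX h, fun h => by simpa [Om] using hX h,
    fun h => by simpa [Om] using hX h⟩

lemma win_root (x y z g : Agent) (X : Set (List ℕ)) (hX : X ⊆ Om) (hxg : x ≠ g)
    (h : (Gm x y z : Game Agent PropVar).Win g X []) :
    (Gm x y z : Game Agent PropVar).Win g X [0] ∧ (Gm x y z : Game Agent PropVar).Win g X [1] := by
  rw [win_binary _ g X [] (by simp [nodeL]) (hch_nil x y z)] at h
  rcases h with h | ⟨hl, _⟩ | ⟨_, h0, h1⟩
  · exact absurd h (notMem_internal hX).1
  · exact absurd (by simpa using hl) hxg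
  · exact ⟨h0, h1⟩

lemma win_m (x y z g : Agent) (X : Set (List ℕ)) (hX : X ⊆ Om) (hyg : y ≠ g)
    (h : (Gm x y z : Game Agent PropVar).Win g X [0]) :
    [0,0] ∈ X ∧ [1,0] ∈ X := by
  rw [win_binary _ g X [0] (by simp [nodeL]) (hch_zero x y z)] at h
  rcases h with h | ⟨hl, _⟩ | ⟨_, h0, h1⟩
  · exact absurd h (notMem_internal hX).2.1
  · exact absurd (by simpa using hl) hyg
  · exact ⟨(win_leaf' x y z g X 0 0).1 h0, (win_leaf' x y z g X 1 0).1 h1⟩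

lemma win_u (x y z g : Agent) (X : Set (List ℕ)) (hX : X ⊆ Om) (hzg : z ≠ g)
    (h : (Gm x y z : Game Agent PropVar).Win g X [1]) :
    [0,1] ∈ X ∧ [1,1] ∈ X := by
  rw [win_binary _ g X [1] (by simp [nodeL]) (hch_one x y z)] at h
  rcases h with h | ⟨hl, _⟩ | ⟨_, h0, h1⟩
  · exact absurd h (notMem_internal hX).2.2
  · exact absurd (by simpa using hl) hzg
  · exact ⟨(win_leaf' x y z g X 0 1).1 h0, (win_leaf' x y z g X 1 1).1 h1⟩

/-- Key lemma: in the witness games, all seeing-to-it truth sets on the invariant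
family are empty. -/
lemma sset_empty (x y z : Agent) (hxy : x ≠ y) (hxz : x ≠ z) (hyz : y ≠ z)
    (g : Agent) (X : Set (List ℕ)) (hX : Finv X) :
    (Gm x y z : Game Agent PropVar).Sset g X = ∅ := by
  obtain ⟨hsub, hp0, hp1⟩ := hX
  ext w
  simp only [Set.mem_empty_iff_false, iff_false]
  rintro ⟨hw, hwin, n, ⟨i, t, rfl, hnN, hlt, ⟨w', hw'o, hw's, hw'X⟩, hall⟩, hsuf⟩
  rw [outcomes_eq] at hw'o
  have hwroot := hwin [] List.nil_suffix
  have hout : ∀ u v : ℕ, [u,v] ∈ Om → [u,v] ∈ (Gm x y z : Game Agent PropVar).outcomes := by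
    intro u v huv; rw [outcomes_eq]; exact huv
  simp only [mem_Node, nodeL, List.mem_cons, List.not_mem_nil, or_false,
    List.cons.injEq, List.cons_ne_nil, false_and, and_false, false_or] at hnN
  rcases hnN with ⟨rfl, rfl⟩|⟨rfl, rfl⟩|⟨rfl, rfl⟩|⟨rfl, rfl⟩|⟨rfl, rfl⟩|⟨rfl, rfl⟩
  · -- n = [0] : all outcomes are in X, contradicting w' ∉ X
    have h00 := hall [0,0] (hout 0 0 (by simp [Om])) (by decide)
    have h10 := hall [1,0] (hout 1 0 (by simp [Om])) (by decide)
    have h01 := hp0.1 h00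
    have h11 := hp1.1 h10
    simp only [Om, Set.mem_insert_iff, Set.mem_singleton_iff] at hw'o
    rcases hw'o with rfl|rfl|rfl|rfl <;> exact hw'X (by assumption)
  · -- n = [1]
    have h01 := hall [0,1] (hout 0 1 (by simp [Om])) (by decide)
    have h11 := hall [1,1] (hout 1 1 (by simp [Om])) (by decide)
    have h00 := hp0.2 h01
    have h10 := hp1.2 h11
    simp only [Om, Set.mem_insert_iff, Set.mem_singleton_iff] at hw'o
    rcases hw'o with rfl|rfl|rfl|rfl <;> exact hw'X (by assumption)
  · -- n = [0,0], parent [0] labelled g, so g = y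
    have hg : y = g := by simpa using hlt
    subst hg
    have h00 := hall [0,0] (hout 0 0 (by simp [Om])) (by decide)
    -- w' is an outcome below [0], hence [0,0] or [1,0]
    have hw'' : w' = [0,0] ∨ w' = [1,0] := by
      simp only [Om, Set.mem_insert_iff, Set.mem_singleton_iff] at hw'o
      rcases hw'o with rfl|rfl|rfl|rfl
      · exact Or.inl rfl
      · exact Or.inr rfl
      · exact absurd hw's (by decide)
      · exact absurd hw's (by decide)
    have h10 : [1,0] ∉ X := by
      rcases hw'' with rfl|rfl
      · exact absurd h00 hw'X
      · exact hw'X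
    have h11 : [1,1] ∉ X := fun h => h10 (hp1.2 h)
    have := win_u x y z y X hsub (Ne.symm hyz) (win_root x y z y X hsub hxy hwroot).2
    exact h11 this.2
  · -- n = [1,0], parent [0] labelled g, so g = y
    have hg : y = g := by simpa using hlt
    subst hg
    have h10 := hall [1,0] (hout 1 0 (by simp [Om])) (by decide)
    have hw'' : w' = [0,0] ∨ w' = [1,0] := by
      simp only [Om, Set.mem_insert_iff, Set.mem_singleton_iff] at hw'o
      rcases hw'o with rfl|rfl|rfl|rfl
      · exact Or.inl rfl
      · exact Or.inr rfl
      · exact absurd hw's (by decide)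
      · exact absurd hw's (by decide)
    have h00 : [0,0] ∉ X := by
      rcases hw'' with rfl|rfl
      · exact hw'X
      · exact absurd h10 hw'X
    have h01 : [0,1] ∉ X := fun h => h00 (hp0.2 h)
    have := win_u x y z y X hsub (Ne.symm hyz) (win_root x y z y X hsub hxy hwroot).2
    exact h01 this.1
  · -- n = [0,1], parent [1] labelled g, so g = z
    have hg : z = g := by simpa using hlt
    subst hg
    have h01 := hall [0,1] (hout 0 1 (by simp [Om])) (by decide)
    have hw'' : w' = [0,1] ∨ w' = [1,1] := by
      simp only [Om, Set.mem_insert_iff, Set.mem_singleton_iff] at hw'o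
      rcases hw'o with rfl|rfl|rfl|rfl
      · exact absurd hw's (by decide)
      · exact absurd hw's (by decide)
      · exact Or.inl rfl
      · exact Or.inr rfl
    have h11 : [1,1] ∉ X := by
      rcases hw'' with rfl|rfl
      · exact absurd h01 hw'X
      · exact hw'X
    have h10 : [1,0] ∉ X := fun h => h11 (hp1.1 h)
    have := win_m x y z z X hsub hyz (win_root x y z z X hsub hxz hwroot).1
    exact h10 this.2
  · -- n = [1,1], parent [1] labelled g, so g = z
    have hg : z = g := by simpa using hlt
    subst hg
    have h11 := hall [1,1] (hout 1 1 (by simp [Om])) (by decide)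
    have hw'' : w' = [0,1] ∨ w' = [1,1] := by
      simp only [Om, Set.mem_insert_iff, Set.mem_singleton_iff] at hw'o
      rcases hw'o with rfl|rfl|rfl|rfl
      · exact absurd hw's (by decide)
      · exact absurd hw's (by decide)
      · exact Or.inl rfl
      · exact Or.inr rfl
    have h01 : [0,1] ∉ X := by
      rcases hw'' with rfl|rfl
      · exact hw'X
      · exact absurd h11 hw'X
    have h00 : [0,0] ∉ X := fun h => h01 (hp0.1 h)
    have := win_m x y z z X hsub hyz (win_root x y z z X hsub hxz hwroot).1
    exact h00 this.1

lemma truth_var (x y z : Agent) (q : PropVar) :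
    (Gm x y z : Game Agent PropVar).truth (.var q) = Pset := by
  ext w
  simp only [Game.truth, Set.mem_setOf_eq, outcomes_eq, leafLabel_Gm]
  constructor
  · rintro ⟨hw, hq⟩
    by_cases h : w = [1,0] ∨ w = [1,1]
    · rcases h with rfl|rfl <;> simp [Pset]
    · rw [if_neg h] at hq; exact absurd hq (Set.notMem_empty q)
  · intro hw
    simp only [Pset, Set.mem_insert_iff, Set.mem_singleton_iff] at hw
    rcases hw with rfl|rfl <;> simp [Om]

lemma Finv_Pset : Finv Pset := by
  refine ⟨?_, by simp [Pset], by simp [Pset]⟩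
  intro w hw
  simp only [Pset, Set.mem_insert_iff, Set.mem_singleton_iff] at hw
  rcases hw with rfl|rfl <;> simp [Om]

lemma Finv_diff {X : Set (List ℕ)} (hX : Finv X) : Finv (Om \ X) := by
  obtain ⟨hsub, hp0, hp1⟩ := hX
  refine ⟨Set.diff_subset, ?_, ?_⟩ <;>
    simp [Set.mem_diff, Om, hp0, hp1]

lemma Finv_inter {X Y : Set (List ℕ)} (hX : Finv X) (hY : Finv Y) : Finv (X ∩ Y) := by
  obtain ⟨hsub, hp0, hp1⟩ := hX
  obtain ⟨hsub', hq0, hq1⟩ := hY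
  exact ⟨fun w hw => hsub hw.1, by rw [Set.mem_inter_iff, Set.mem_inter_iff, hp0, hq0],
    by rw [Set.mem_inter_iff, Set.mem_inter_iff, hp1, hq1]⟩

lemma Finv_empty : Finv (∅ : Set (List ℕ)) := ⟨Set.empty_subset _, by simp, by simp⟩

/-- Main induction: every C-free formula has the same truth set in the two witness
games, and this truth set lies in the invariant family. -/
lemma truth_noC (a b c : Agent) (hab : a ≠ b) (hac : a ≠ c) (hbc : b ≠ c) :
    ∀ ψ : Formula Agent PropVar, ψ.noC →
      (Gm a b c : Game Agent PropVar).truth ψ = (Gm b a c : Game Agent PropVar).truth ψ ∧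
        Finv ((Gm a b c : Game Agent PropVar).truth ψ) := by
  intro ψ
  induction ψ with
  | var q => exact fun _ => ⟨(truth_var a b c q).trans (truth_var b a c q).symm,
      (truth_var a b c q) ▸ Finv_Pset⟩
  | neg φ ih =>
      intro h
      obtain ⟨he, hf⟩ := ih h
      constructor
      · show (Gm a b c : Game Agent PropVar).outcomes \ _ = (Gm b a c : Game Agent PropVar).outcomes \ _
        rw [outcomes_eq, outcomes_eq, he]
      · show Finv ((Gm a b c : Game Agent PropVar).outcomes \ _)
        rw [outcomes_eq]
        exact Finv_diff hf
  | and φ₁ φ₂ ih₁ ih₂ =>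
      intro h
      obtain ⟨he₁, hf₁⟩ := ih₁ h.1
      obtain ⟨he₂, hf₂⟩ := ih₂ h.2
      exact ⟨by show _ ∩ _ = _ ∩ _; rw [he₁, he₂], Finv_inter hf₁ hf₂⟩
  | C g φ ih => intro h; exact absurd h (by simp [Formula.noC])
  | S g φ ih =>
      intro h
      obtain ⟨he, hf⟩ := ih h
      have h1 : (Gm a b c : Game Agent PropVar).truth (.S g φ) = ∅ := by
        show (Gm a b c : Game Agent PropVar).Sset g _ = ∅
        exact sset_empty a b c hab hac hbc g _ hf
      have h2 : (Gm b a c : Game Agent PropVar).truth (.S g φ) = ∅ := by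
        show (Gm b a c : Game Agent PropVar).Sset g _ = ∅
        exact sset_empty b a c (Ne.symm hab) hbc hac g _ (he ▸ hf)
      exact ⟨h1.trans h2.symm, h1 ▸ Finv_empty⟩

/-- In `Gm b a c` the outcome `[1,0]` satisfies `C_a p`. -/
lemma mem_C_G2 (a b c : Agent) (hab : a ≠ b) (p : PropVar) :
    [1,0] ∈ (Gm b a c : Game Agent PropVar).truth (.C a (.var p)) := by
  show [1,0] ∈ (Gm b a c : Game Agent PropVar).Cset a ((Gm b a c : Game Agent PropVar).truth (.var p))
  rw [truth_var]
  refine ⟨by simp [Pset], [0], by decide, ?_⟩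
  refine Win.own [0] (by simp [nodeL]) (by simp [Ne.symm hab]) 0 (by simp [nodeL]) ?_
  refine Win.mem _ ⟨?_, ?_⟩
  · rw [outcomes_eq]; simp [Om]
  · simp [Pset]

lemma suffix_pair {u v : ℕ} {n : List ℕ} (h : n <:+ [u, v]) :
    n = [] ∨ n = [v] ∨ n = [u, v] := by
  rcases List.suffix_cons_iff.mp h with h | h
  · exact Or.inr (Or.inr h)
  rcases List.suffix_cons_iff.mp h with h | h
  · exact Or.inr (Or.inl h)
  · exact Or.inl (List.suffix_nil.mp h)

/-- In `Gm a b c` the outcome `[1,0]` does not satisfy `C_a p`. -/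
lemma notMem_C_G1 (a b c : Agent) (hab : a ≠ b) (hac : a ≠ c) (p : PropVar) :
    [1,0] ∉ (Gm a b c : Game Agent PropVar).truth (.C a (.var p)) := by
  show [1,0] ∉ (Gm a b c : Game Agent PropVar).Cset a ((Gm a b c : Game Agent PropVar).truth (.var p))
  rw [truth_var]
  rintro ⟨-, n, hsuf, hwin⟩
  set X : Set (List ℕ) := (Gm a b c : Game Agent PropVar).outcomes \ Pset with hXdef
  have hXsub : X ⊆ Om := by rw [hXdef, outcomes_eq]; exact Set.diff_subset
  have hX10 : [1,0] ∉ X := fun h => h.2 (by simp [Pset])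
  have hX11 : [1,1] ∉ X := fun h => h.2 (by simp [Pset])
  have hwm : ¬ (Gm a b c : Game Agent PropVar).Win a X [0] := by
    intro h
    exact hX10 (win_m a b c a X hXsub (Ne.symm hab) h).2
  have hwu : ¬ (Gm a b c : Game Agent PropVar).Win a X [1] := by
    intro h
    exact hX11 (win_u a b c a X hXsub (Ne.symm hac) h).2
  rcases suffix_pair hsuf with rfl|rfl|rfl
  · rw [win_binary _ a X [] (by simp [nodeL]) (hch_nil a b c)] at hwin
    rcases hwin with h | ⟨-, (h|h)⟩ | ⟨-, h, -⟩
    · exact (notMem_internal hXsub).1 h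
    · exact hwm h
    · exact hwu h
    · exact hwm h
  · exact hwm hwin
  · exact hX10 ((win_leaf' a b c a X 1 0).1 hwin)

end CUndef

/-- if the agent set contains three distinct agents `a`, `b`, `c` and
there is a propositional variable `p`, then `C_a p` is not semantically equivalent
to any formula containing no occurrence of the modality `C`. -/
theorem C_undefinable_via_S {Agent PropVar : Type}
    (a b c : Agent) (hab : a ≠ b) (hac : a ≠ c) (hbc : b ≠ c) (p : PropVar) :
    ∀ ψ : Formula Agent PropVar, ψ.noC →
      ∃ G : Game Agent PropVar, G.truth (.C a (.var p)) ≠ G.truth ψ := by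
  classical
  intro ψ hψ
  by_cases h1 : (CUndef.Gm a b c : Game Agent PropVar).truth (.C a (.var p))
      = (CUndef.Gm a b c : Game Agent PropVar).truth ψ
  · refine ⟨CUndef.Gm b a c, fun h2 => ?_⟩
    obtain ⟨he, -⟩ := CUndef.truth_noC a b c hab hac hbc ψ hψ
    have h10 : [1,0] ∈ (CUndef.Gm b a c : Game Agent PropVar).truth (.C a (.var p)) :=
      CUndef.mem_C_G2 a b c hab p
    rw [h2, ← he, ← h1] at h10
    exact CUndef.notMem_C_G1 a b c hab hac p h10
  · exact ⟨CUndef.Gm a b c, h1⟩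
end

section
/- Suppose the agent set contains at least two distinct agents a, b and the set of propositional variables contains a variable p. Then the formula S_a p is not semantically equivalent to any formula in the language Φ that contains no occurrence of the modality S. That is, for every formula ψ ∈ Φ built only from propositional variables, ¬, ∧, and the modalities C_g (g an agent), there exists an extensive form game in which ⟦S_a p⟧ ≠ ⟦ψ⟧. -/
/-!
In the chain game of odd length `n` the nodes `spine 0, …, spine n` alternate between `a` (even
depth) and `b` (odd depth), every `spine j` with `j < n` has one further child, the outcome
`leaf j`, and `p` holds exactly at the odd leaves and at the end `spine n`. Agent `a` sees to `p`
at `spine n` by its last move, but at no leaf. A formula without `S` of modal depth `d`, however,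
cannot tell apart two leaves of equal parity at depths `≥ d`, nor an odd one from the end. Indeed,
if a set of outcomes has this property above depth `d`, then whether an agent can force its
complement from some spine node above `leaf j` does not depend on `j ≥ d + 1`, since a spine node
won at a greater depth forces one won at depth `d` or `d + 1`. So each `C_g` costs one level, and
for `n > 2d + 2` the outcomes `leaf (n - 2)` and `spine n` separate `S_a p` from the formula.
-/
namespace Formula

variable {Agent PropVar : Type}

def modalDepth : Formula Agent PropVar → ℕ
  | .var _ => 0
  | .neg φ => φ.modalDepth
  | .and φ ψ => max φ.modalDepth ψ.modalDepth
  | .C _ φ => φ.modalDepth + 1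
  | .S _ φ => φ.modalDepth + 1

end Formula

namespace Game

variable {Agent PropVar : Type}

theorem Win.mem_of_mem_outcomes {G : Game Agent PropVar} {g : Agent} {Y : Set (List ℕ)}
    {l : List ℕ} (hl : l ∈ G.outcomes) (h : G.Win g Y l) : l ∈ Y := by
  cases h with
  | mem _ hw => exact hw
  | own _ _ _ i hi _ => exact absurd hi (hl.2 i)
  | other _ _ _ hne _ => exact absurd hne.choose_spec (hl.2 _)

end Game

namespace ChainGame

open Game

def spine (j : ℕ) : List ℕ := List.replicate j 0

def leaf (j : ℕ) : List ℕ := 1 :: spine j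

theorem spine_injective : Function.Injective spine := fun j k h => by
  simpa [spine] using congrArg List.length h

theorem leaf_ne_spine (j k : ℕ) : leaf j ≠ spine k := fun h => by
  have : (1 : ℕ) ∈ spine k := h ▸ List.mem_cons_self
  simp [spine] at this

theorem suffix_spine_iff {s : List ℕ} {j : ℕ} : s <:+ spine j ↔ ∃ k ≤ j, s = spine k := by
  rw [spine, List.suffix_replicate_iff]
  constructor
  · rintro ⟨hs, h⟩
    exact ⟨_, hs, h⟩
  · rintro ⟨k, hk, rfl⟩
    simpa [spine] using hk

theorem suffix_leaf_iff {s : List ℕ} {j : ℕ} :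
    s <:+ leaf j ↔ s = leaf j ∨ ∃ k ≤ j, s = spine k := by
  rw [leaf, List.suffix_cons_iff, suffix_spine_iff]

variable {Agent PropVar : Type}

def chainGame (a b : Agent) (n : ℕ) : Game Agent PropVar where
  Node := {l | (∃ j ≤ n, l = spine j) ∨ ∃ j < n, l = leaf j}
  root_mem := Or.inl ⟨0, n.zero_le, rfl⟩
  downward := by
    rintro i t (⟨_ | j, hj, h⟩ | ⟨j, hj, h⟩)
    · simp [spine] at h
    · exact Or.inl ⟨j, by omega, (List.cons.inj h).2⟩
    · exact Or.inl ⟨j, hj.le, (List.cons.inj h).2⟩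
  finite := by
    refine (((Set.finite_Iic n).image spine).union ((Set.finite_Iio n).image leaf)).subset ?_
    rintro l (⟨j, hj, rfl⟩ | ⟨j, hj, rfl⟩)
    exacts [Or.inl ⟨j, hj, rfl⟩, Or.inr ⟨j, hj, rfl⟩]
  label l := if l.length % 2 = 0 then a else b
  leafLabel l := {_q | (∃ j, j % 2 = 1 ∧ l = leaf j) ∨ l = spine n}

variable {a b g : Agent} {n d j : ℕ}

theorem spine_mem (hj : j ≤ n) : spine j ∈ (chainGame a b n : Game Agent PropVar).Node :=
  Or.inl ⟨j, hj, rfl⟩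

theorem leaf_mem (hj : j < n) : leaf j ∈ (chainGame a b n : Game Agent PropVar).Node :=
  Or.inr ⟨j, hj, rfl⟩

theorem cons_spine_mem_iff {i : ℕ} :
    i :: spine j ∈ (chainGame a b n : Game Agent PropVar).Node ↔ (i = 0 ∨ i = 1) ∧ j < n := by
  constructor
  · rintro (⟨_ | k, hk, h⟩ | ⟨k, hk, h⟩)
    · simp [spine] at h
    · obtain ⟨rfl, hjk⟩ := List.cons.inj h
      exact ⟨Or.inl rfl, spine_injective hjk ▸ hk⟩
    · obtain ⟨rfl, hjk⟩ := List.cons.inj h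
      exact ⟨Or.inr rfl, spine_injective hjk ▸ hk⟩
  · rintro ⟨rfl | rfl, hj⟩
    exacts [spine_mem hj, leaf_mem hj]

theorem cons_leaf_not_mem {i : ℕ} : i :: leaf j ∉ (chainGame a b n : Game Agent PropVar).Node := by
  rintro (⟨_ | k, -, h⟩ | ⟨k, -, h⟩)
  · simp [spine] at h
  · exact leaf_ne_spine j k (List.cons.inj h).2
  · exact leaf_ne_spine j k (List.cons.inj h).2

theorem leaf_mem_outcomes (hj : j < n) :
    leaf j ∈ (chainGame a b n : Game Agent PropVar).outcomes :=
  ⟨leaf_mem hj, fun _ => cons_leaf_not_mem⟩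

theorem spine_self_mem_outcomes : spine n ∈ (chainGame a b n : Game Agent PropVar).outcomes :=
  ⟨spine_mem le_rfl, fun _ h => (cons_spine_mem_iff.mp h).2.false⟩

theorem mem_outcomes_iff {l : List ℕ} :
    l ∈ (chainGame a b n : Game Agent PropVar).outcomes ↔ (∃ j < n, l = leaf j) ∨ l = spine n := by
  constructor
  · rintro ⟨⟨j, hj, rfl⟩ | hl, hleaf⟩
    · refine Or.inr (congrArg spine (hj.antisymm (not_lt.mp fun hjn => hleaf 0 ?_)))
      exact cons_spine_mem_iff.mpr ⟨Or.inl rfl, hjn⟩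
    · exact Or.inl hl
  · rintro (⟨j, hj, rfl⟩ | rfl)
    exacts [leaf_mem_outcomes hj, spine_self_mem_outcomes]

theorem label_spine :
    (chainGame a b n : Game Agent PropVar).label (spine j) = if j % 2 = 0 then a else b := by
  simp [chainGame, spine]

theorem label_spine_eq_of_mod_two_eq {k : ℕ} (h : j % 2 = k % 2) :
    (chainGame a b n : Game Agent PropVar).label (spine j) =
      (chainGame a b n : Game Agent PropVar).label (spine k) := by
  rw [label_spine, label_spine, h]

theorem label_spine_eq_left_iff (hab : a ≠ b) :
    (chainGame a b n : Game Agent PropVar).label (spine j) = a ↔ j % 2 = 0 := by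
  rw [label_spine]
  split_ifs with h <;> simp [h, hab.symm]

theorem leaf_mem_truth_var_iff {q : PropVar} (hj : j < n) :
    leaf j ∈ (chainGame a b n : Game Agent PropVar).truth (.var q) ↔ j % 2 = 1 := by
  refine ⟨?_, fun h => ⟨leaf_mem_outcomes hj, Or.inl ⟨j, h, rfl⟩⟩⟩
  rintro ⟨-, ⟨k, hk, h⟩ | h⟩
  · rwa [spine_injective (List.cons.inj h).2]
  · exact absurd h (leaf_ne_spine j n)

theorem spine_self_mem_truth_var {q : PropVar} :
    spine n ∈ (chainGame a b n : Game Agent PropVar).truth (.var q) :=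
  ⟨spine_self_mem_outcomes, Or.inr rfl⟩

section Win

variable {Y : Set (List ℕ)}

theorem win_spine_iff (hj : j < n) (hY : Y ⊆ (chainGame a b n : Game Agent PropVar).outcomes) :
    (chainGame a b n : Game Agent PropVar).Win g Y (spine j) ↔
      (chainGame a b n : Game Agent PropVar).label (spine j) = g ∧
          (leaf j ∈ Y ∨ (chainGame a b n : Game Agent PropVar).Win g Y (spine (j + 1))) ∨
        (chainGame a b n : Game Agent PropVar).label (spine j) ≠ g ∧
          leaf j ∈ Y ∧ (chainGame a b n : Game Agent PropVar).Win g Y (spine (j + 1)) := by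
  have hleaf : (chainGame a b n : Game Agent PropVar).Win g Y (leaf j) → leaf j ∈ Y :=
    Win.mem_of_mem_outcomes (leaf_mem_outcomes hj)
  constructor
  · intro h
    cases h with
    | mem _ hw =>
      exact absurd (hY hw).2 (not_forall_not.mpr ⟨0, cons_spine_mem_iff.mpr ⟨Or.inl rfl, hj⟩⟩)
    | own _ _ hl i hi hw =>
      rcases (cons_spine_mem_iff.mp hi).1 with rfl | rfl
      exacts [Or.inl ⟨hl, Or.inr hw⟩, Or.inl ⟨hl, Or.inl (hleaf hw)⟩]
    | other _ _ hl _ hc =>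
      exact Or.inr ⟨hl, hleaf (hc 1 (leaf_mem hj)), hc 0 (spine_mem hj)⟩
  · rintro (⟨hl, hu | hw⟩ | ⟨hl, hu, hw⟩)
    · exact .own _ (spine_mem hj.le) hl 1 (leaf_mem hj) (.mem _ hu)
    · exact .own _ (spine_mem hj.le) hl 0 (spine_mem hj) hw
    · refine .other _ (spine_mem hj.le) hl ⟨0, spine_mem hj⟩ fun i hi => ?_
      rcases (cons_spine_mem_iff.mp hi).1 with rfl | rfl
      exacts [hw, .mem _ hu]

theorem win_spine_of_end_mem (hY : Y ⊆ (chainGame a b n : Game Agent PropVar).outcomes)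
    (hend : spine n ∈ Y)
    (hleaf : ∀ k, d ≤ k → k < n →
      (chainGame a b n : Game Agent PropVar).label (spine k) ≠ g → leaf k ∈ Y)
    (hdj : d ≤ j) (hjn : j ≤ n) : (chainGame a b n : Game Agent PropVar).Win g Y (spine j) := by
  induction hjn using Nat.decreasingInduction with
  | self => exact .mem _ hend
  | of_succ k hk ih =>
    rw [win_spine_iff hk hY]
    by_cases hl : (chainGame a b n : Game Agent PropVar).label (spine k) = g
    exacts [Or.inl ⟨hl, Or.inr (ih (by omega))⟩, Or.inr ⟨hl, hleaf k hdj hk hl, ih (by omega)⟩]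

end Win

structure ParityBlind (n d : ℕ) (X : Set (List ℕ)) : Prop where
  leaf_iff_leaf : ∀ j k, d ≤ j → j < n → d ≤ k → k < n → j % 2 = k % 2 → (leaf j ∈ X ↔ leaf k ∈ X)
  leaf_iff_end : ∀ j, d ≤ j → j < n → j % 2 = 1 → (leaf j ∈ X ↔ spine n ∈ X)

namespace ParityBlind

variable {X Y : Set (List ℕ)}

theorem mono {d' : ℕ} (h : ParityBlind n d X) (hd : d ≤ d') : ParityBlind n d' X :=
  ⟨fun j k hj hjn hk hkn hjk => h.1 j k (hd.trans hj) hjn (hd.trans hk) hkn hjk,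
    fun j hj hjn hodd => h.2 j (hd.trans hj) hjn hodd⟩

theorem inter (hX : ParityBlind n d X) (hY : ParityBlind n d Y) : ParityBlind n d (X ∩ Y) :=
  ⟨fun j k hj hjn hk hkn hjk =>
      and_congr (hX.1 j k hj hjn hk hkn hjk) (hY.1 j k hj hjn hk hkn hjk),
    fun j hj hjn hodd => and_congr (hX.2 j hj hjn hodd) (hY.2 j hj hjn hodd)⟩

theorem diff (hX : ParityBlind n d X) (hY : ParityBlind n d Y) : ParityBlind n d (X \ Y) :=
  ⟨fun j k hj hjn hk hkn hjk =>
      and_congr (hX.1 j k hj hjn hk hkn hjk) (not_congr (hY.1 j k hj hjn hk hkn hjk)),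
    fun j hj hjn hodd => and_congr (hX.2 j hj hjn hodd) (not_congr (hY.2 j hj hjn hodd))⟩

end ParityBlind

theorem parityBlind_outcomes : ParityBlind n d (chainGame a b n : Game Agent PropVar).outcomes :=
  ⟨fun _ _ _ hj _ hk _ => iff_of_true (leaf_mem_outcomes hj) (leaf_mem_outcomes hk),
    fun _ _ hj _ => iff_of_true (leaf_mem_outcomes hj) spine_self_mem_outcomes⟩

section Descent

variable {Y : Set (List ℕ)} (hY : Y ⊆ (chainGame a b n : Game Agent PropVar).outcomes)
  (hYb : ParityBlind n d Y)
include hY hYb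

theorem exists_win_spine_le_of_owned (hd : d + 2 ≤ n) (hdj : d ≤ j) (hjn : j < n)
    (hl : (chainGame a b n : Game Agent PropVar).label (spine j) = g) (hu : leaf j ∈ Y) :
    ∃ k ≤ d + 1, (chainGame a b n : Game Agent PropVar).Win g Y (spine k) := by
  obtain ⟨k, hdk, hkd, hjk⟩ : ∃ k, d ≤ k ∧ k ≤ d + 1 ∧ j % 2 = k % 2 :=
    if h : j % 2 = d % 2 then ⟨d, le_rfl, by omega, h⟩ else ⟨d + 1, by omega, le_rfl, by omega⟩
  have hkn : k < n := by omega
  refine ⟨k, hkd, (win_spine_iff hkn hY).mpr (Or.inl ⟨?_, Or.inl ?_⟩)⟩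
  · rwa [← label_spine_eq_of_mod_two_eq hjk]
  · exact (hYb.1 j k hdj hjn hdk hkn hjk).mp hu

theorem win_spine_of_end_mem_of_last (hn : n % 2 = 1) (hd : d + 2 ≤ n) (hjn : j + 1 = n)
    (hend : spine n ∈ Y)
    (hlast : (chainGame a b n : Game Agent PropVar).label (spine j) = g ∨ leaf j ∈ Y) :
    (chainGame a b n : Game Agent PropVar).Win g Y (spine (d + 1)) := by
  refine win_spine_of_end_mem (d := d) hY hend (fun k hdk hkn hl => ?_) (by omega) (by omega)
  rcases Nat.mod_two_eq_zero_or_one k with hk2 | hk2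
  · have hjk : j % 2 = k % 2 := by omega
    refine (hYb.1 j k (by omega) (by omega) hdk hkn hjk).mp (hlast.resolve_left fun hj => hl ?_)
    rwa [← label_spine_eq_of_mod_two_eq hjk]
  · exact (hYb.2 k hdk hkn hk2).mpr hend

theorem exists_win_spine_le_of_win (hn : n % 2 = 1) (hd : d + 2 ≤ n)
    (hdj : d + 1 ≤ j) (hjn : j < n)
    (hw : (chainGame a b n : Game Agent PropVar).Win g Y (spine j)) :
    ∃ k ≤ d + 1, (chainGame a b n : Game Agent PropVar).Win g Y (spine k) := by
  have hjn' := hjn.le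
  induction hjn' using Nat.decreasingInduction with
  | self => omega
  | of_succ k hk ih =>
    -- Along the play up the spine, either `g` takes an owned leaf of `Y`, which has a copy of the
    -- same parity at depth `d` or `d + 1`, or the play reaches the end.
    have climb : (chainGame a b n : Game Agent PropVar).Win g Y (spine (k + 1)) →
        (chainGame a b n : Game Agent PropVar).label (spine k) = g ∨ leaf k ∈ Y →
        ∃ m ≤ d + 1, (chainGame a b n : Game Agent PropVar).Win g Y (spine m) := by
      intro hw' hlast
      rcases Nat.lt_or_ge (k + 1) n with hkn | hkn
      · exact ih (by omega) hkn hw'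
      · replace hkn : k + 1 = n := by omega
        rw [hkn] at hw'
        have hend : spine n ∈ Y := Win.mem_of_mem_outcomes spine_self_mem_outcomes hw'
        exact ⟨d + 1, le_rfl, win_spine_of_end_mem_of_last hY hYb hn hd hkn hend hlast⟩
    rcases (win_spine_iff hk hY).mp hw with ⟨hl, hu | hw'⟩ | ⟨-, hu, hw'⟩
    · exact exists_win_spine_le_of_owned hY hYb hd (by omega) hk hl hu
    · exact climb hw' (Or.inl hl)
    · exact climb hw' (Or.inr hu)

theorem exists_win_spine_le_iff (hn : n % 2 = 1) (hd : d + 2 ≤ n) (hdj : d + 1 ≤ j)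
    (hjn : j < n) :
    (∃ k ≤ j, (chainGame a b n : Game Agent PropVar).Win g Y (spine k)) ↔
      ∃ k ≤ d + 1, (chainGame a b n : Game Agent PropVar).Win g Y (spine k) := by
  refine ⟨fun ⟨k, hkj, hw⟩ => ?_, fun ⟨k, hk, hw⟩ => ⟨k, hk.trans hdj, hw⟩⟩
  rcases le_or_gt k (d + 1) with hk | hk
  exacts [⟨k, hk, hw⟩, exists_win_spine_le_of_win hY hYb hn hd hk.le (by omega) hw]

end Descent

section Cset

variable {X : Set (List ℕ)}

theorem leaf_mem_Cset_iff (hj : j < n) :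
    leaf j ∈ (chainGame a b n : Game Agent PropVar).Cset g X ↔ leaf j ∈ X ∧
      ∃ k ≤ j, (chainGame a b n : Game Agent PropVar).Win g
        ((chainGame a b n : Game Agent PropVar).outcomes \ X) (spine k) := by
  refine ⟨fun ⟨hx, s, hs, hw⟩ => ⟨hx, ?_⟩, fun ⟨hx, k, hk, hw⟩ =>
    ⟨hx, spine k, suffix_leaf_iff.mpr (Or.inr ⟨k, hk, rfl⟩), hw⟩⟩
  rcases suffix_leaf_iff.mp hs with rfl | ⟨k, hk, rfl⟩
  exacts [absurd hx (Win.mem_of_mem_outcomes (leaf_mem_outcomes hj) hw).2, ⟨k, hk, hw⟩]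

theorem spine_self_mem_Cset_iff :
    spine n ∈ (chainGame a b n : Game Agent PropVar).Cset g X ↔ spine n ∈ X ∧
      ∃ k < n, (chainGame a b n : Game Agent PropVar).Win g
        ((chainGame a b n : Game Agent PropVar).outcomes \ X) (spine k) := by
  refine ⟨fun ⟨hx, s, hs, hw⟩ => ⟨hx, ?_⟩, fun ⟨hx, k, hk, hw⟩ =>
    ⟨hx, spine k, suffix_spine_iff.mpr ⟨k, hk.le, rfl⟩, hw⟩⟩
  obtain ⟨k, hk, rfl⟩ := suffix_spine_iff.mp hs
  rcases hk.lt_or_eq with hk | rfl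
  exacts [⟨k, hk, hw⟩, absurd hx (Win.mem_of_mem_outcomes spine_self_mem_outcomes hw).2]

theorem ParityBlind.Cset (hn : n % 2 = 1) (hd : d + 2 ≤ n) (hX : ParityBlind n d X) :
    ParityBlind n (d + 1) ((chainGame a b n : Game Agent PropVar).Cset g X) := by
  have key := fun j => exists_win_spine_le_iff (j := j) (g := g)
    (Y := (chainGame a b n : Game Agent PropVar).outcomes \ X) Set.sdiff_subset
    (parityBlind_outcomes.diff hX) hn hd
  constructor
  · intro j k hj hjn hk hkn hjk
    rw [leaf_mem_Cset_iff hjn, leaf_mem_Cset_iff hkn, key j hj hjn, key k hk hkn,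
      hX.1 j k (by omega) hjn (by omega) hkn hjk]
  · intro j hj hjn hodd
    rw [leaf_mem_Cset_iff hjn, spine_self_mem_Cset_iff, key j hj hjn, hX.2 j (by omega) hjn hodd,
      ← key (n - 1) (by omega) (by omega)]
    exact and_congr_right' (exists_congr fun k => and_congr_left' (by omega))

end Cset

theorem parityBlind_truth (hn : n % 2 = 1) : ∀ φ : Formula Agent PropVar, φ.noS →
    φ.modalDepth + 2 ≤ n →
      ParityBlind n φ.modalDepth ((chainGame a b n : Game Agent PropVar).truth φ)
  | .var _, _, _ =>
    ⟨fun j k _ hjn _ hkn hjk => by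
        rw [leaf_mem_truth_var_iff hjn, leaf_mem_truth_var_iff hkn, hjk],
      fun j _ hjn hodd => iff_of_true ((leaf_mem_truth_var_iff hjn).mpr hodd)
        spine_self_mem_truth_var⟩
  | .neg φ, hS, hd => parityBlind_outcomes.diff (parityBlind_truth hn φ hS hd)
  | .and φ ψ, hS, hd =>
    have hφ := (Nat.add_le_add_right (le_max_left φ.modalDepth ψ.modalDepth) 2).trans hd
    have hψ := (Nat.add_le_add_right (le_max_right φ.modalDepth ψ.modalDepth) 2).trans hd
    ((parityBlind_truth hn φ hS.1 hφ).mono (le_max_left _ _)).inter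
      ((parityBlind_truth hn ψ hS.2 hψ).mono (le_max_right _ _))
  | .C _ φ, hS, hd =>
    have hd : φ.modalDepth + 3 ≤ n := hd
    (parityBlind_truth hn φ hS (by omega)).Cset hn (by omega)
  | .S _ _, hS, _ => hS.elim

variable {p : PropVar}

theorem spine_self_mem_truth_S (hab : a ≠ b) (hn : n % 2 = 1) :
    spine n ∈ (chainGame a b n : Game Agent PropVar).truth (.S a (.var p)) := by
  refine ⟨spine_self_mem_outcomes, fun s hs => ?_, ?_⟩
  · obtain ⟨k, hk, rfl⟩ := suffix_spine_iff.mp hs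
    refine win_spine_of_end_mem (d := 0) (fun _ h => h.1) spine_self_mem_truth_var
      (fun m _ hm hl => (leaf_mem_truth_var_iff hm).mpr ?_) k.zero_le hk
    have := mt (label_spine_eq_left_iff hab).mpr hl
    omega
  · obtain ⟨m, rfl⟩ : ∃ m, n = m + 1 := ⟨n - 1, by omega⟩
    refine ⟨spine (m + 1), ⟨0, spine m, rfl, spine_mem le_rfl,
      (label_spine_eq_left_iff hab).mpr (by omega), ⟨leaf m, leaf_mem_outcomes m.lt_succ_self,
        List.suffix_cons _ _, fun h => ?_⟩, fun w hw hsw => ?_⟩, List.suffix_refl _⟩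
    · have := (leaf_mem_truth_var_iff m.lt_succ_self).mp h
      omega
    · rcases mem_outcomes_iff.mp hw with ⟨k, hk, rfl⟩ | rfl
      · rcases suffix_leaf_iff.mp hsw with h | ⟨l, hl, h⟩
        · exact absurd h.symm (leaf_ne_spine _ _)
        · have := spine_injective h
          omega
      · exact spine_self_mem_truth_var

theorem leaf_not_mem_truth_S (hab : a ≠ b) (hn : n % 2 = 1) (hj : j < n) :
    leaf j ∉ (chainGame a b n : Game Agent PropVar).truth (.S a (.var p)) := by
  rintro ⟨-, -, s, ⟨i, t, rfl, -, hlab, -, hall⟩, hs⟩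
  rcases suffix_leaf_iff.mp hs with h | ⟨_ | m, hm, h⟩
  · obtain ⟨rfl, rfl⟩ := List.cons.inj h
    have := (leaf_mem_truth_var_iff hj).mp (hall _ (leaf_mem_outcomes hj) List.suffix_rfl)
    have := (label_spine_eq_left_iff hab).mp hlab
    omega
  · simp [spine] at h
  · obtain ⟨rfl, rfl⟩ := List.cons.inj h
    have hm2 := (label_spine_eq_left_iff hab).mp hlab
    have hmn : m + 2 < n := by omega
    have := (leaf_mem_truth_var_iff hmn).mp (hall _ (leaf_mem_outcomes hmn)
      (suffix_leaf_iff.mpr (Or.inr ⟨m + 1, by omega, rfl⟩)))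
    omega

end ChainGame

open ChainGame

/-- if the agent set contains two distinct agents `a`, `b` and there is
a propositional variable `p`, then `S_a p` is not semantically equivalent to any
formula containing no occurrence of the modality `S`. -/
theorem S_undefinable_via_C {Agent PropVar : Type}
    (a b : Agent) (hab : a ≠ b) (p : PropVar) :
    ∀ ψ : Formula Agent PropVar, ψ.noS →
      ∃ G : Game Agent PropVar, G.truth (.S a (.var p)) ≠ G.truth ψ := by
  intro ψ hψ
  set n := 2 * ψ.modalDepth + 3
  have hn : n % 2 = 1 := by omega
  refine ⟨chainGame a b n, fun h => ?_⟩
  have hblind := parityBlind_truth (a := a) (b := b) hn ψ hψ (by omega)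
  apply leaf_not_mem_truth_S hab hn (j := n - 2) (by omega)
  rw [h, hblind.leaf_iff_end (n - 2) (by omega) (by omega) (by omega), ← h]
  exact spine_self_mem_truth_S hab hn
end

section
/- Let G be an extensive form game in which every non-leaf node is labelled with one of two distinct agents a and b. Then for any formula φ ∈ Φ and any node n of G, if n ∉ win_a(⟦φ⟧), then n ∈ win_b(⟦¬φ⟧). -/
lemma Game.truth_subset_outcomes {Agent PropVar : Type} (G : Game Agent PropVar)
    (φ : Formula Agent PropVar) : G.truth φ ⊆ G.outcomes := by
  induction φ with
  | var p => intro w hw; exact hw.1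
  | neg φ ih => intro w hw; exact hw.1
  | and φ ψ ihφ ihψ => intro w hw; exact ihφ hw.1
  | C a φ ih => intro w hw; exact ih hw.1
  | S a φ ih => intro w hw; exact hw.1

lemma Game.win_two_agents_aux {Agent PropVar : Type} (G : Game Agent PropVar)
    (a b : Agent) (hab : a ≠ b)
    (hlab : ∀ n ∈ G.Node, (∃ i : ℕ, i :: n ∈ G.Node) → G.label n = a ∨ G.label n = b)
    (X : Set (List ℕ)) (hX : X ⊆ G.outcomes) :
    ∀ k (n : List ℕ), ({x ∈ G.Node | n <:+ x}).ncard ≤ k → n ∈ G.Node →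
      ¬ G.Win a X n → G.Win b (G.outcomes \ X) n := by
  intro k
  induction k with
  | zero =>
    intro n hk hn _
    exfalso
    have : n ∈ {x ∈ G.Node | n <:+ x} := ⟨hn, List.suffix_refl n⟩
    have hfin : ({x ∈ G.Node | n <:+ x}).Finite := G.finite.subset (fun x hx => hx.1)
    have := Set.ncard_pos hfin |>.mpr ⟨n, this⟩
    omega
  | succ k ih =>
    intro n hk hn h
    have hfin : ({x ∈ G.Node | n <:+ x}).Finite := G.finite.subset (fun x hx => hx.1)
    have hmeas : ∀ i : ℕ, i :: n ∈ G.Node →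
        ({x ∈ G.Node | i :: n <:+ x}).ncard ≤ k := by
      intro i hi
      have hss : {x ∈ G.Node | i :: n <:+ x} ⊂ {x ∈ G.Node | n <:+ x} := by
        constructor
        · intro x hx
          exact ⟨hx.1, (List.suffix_cons i n).trans hx.2⟩
        · intro hcon
          have : n ∈ {x ∈ G.Node | i :: n <:+ x} := hcon ⟨hn, List.suffix_refl n⟩
          have := this.2.length_le
          simp at this
      have := Set.ncard_lt_ncard hss hfin
      omega
    by_cases hch : ∃ i : ℕ, i :: n ∈ G.Node
    · -- non-leaf
      have hnl : n ∉ G.outcomes := by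
        rintro ⟨-, hno⟩
        obtain ⟨i, hi⟩ := hch
        exact hno i hi
      have hnX : n ∉ X := fun hc => hnl (hX hc)
      rcases hlab n hn hch with hla | hlb
      · -- label = a : all children fail Win a
        have hall : ∀ i : ℕ, i :: n ∈ G.Node → ¬ G.Win a X (i :: n) := by
          intro i hi hw
          exact h (Game.Win.own n hn hla i hi hw)
        refine Game.Win.other n hn (by rw [hla]; exact hab) hch ?_
        intro i hi
        exact ih (i :: n) (hmeas i hi) hi (hall i hi)
      · -- label = b : some child fails Win a
        have : ¬ ∀ i : ℕ, i :: n ∈ G.Node → G.Win a X (i :: n) := by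
          intro hall
          exact h (Game.Win.other n hn (by rw [hlb]; exact fun e => hab e.symm) hch hall)
        push_neg at this
        obtain ⟨i, hi, hw⟩ := this
        exact Game.Win.own n hn hlb i hi (ih (i :: n) (hmeas i hi) hi hw)
    · -- leaf
      push_neg at hch
      have hnX : n ∉ X := fun hc => h (Game.Win.mem n hc)
      exact Game.Win.mem n ⟨⟨hn, hch⟩, hnX⟩

/-- in a two-agent extensive form game between agents `a` and `b`
(every non-leaf node is labelled with `a` or `b`), for any formula `φ` and node `n`,
if `n ∉ win_a(⟦φ⟧)` then `n ∈ win_b(⟦¬φ⟧)`. -/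
theorem win_two_agents {Agent PropVar : Type} (G : Game Agent PropVar)
    (a b : Agent) (hab : a ≠ b)
    (hlab : ∀ n ∈ G.Node, (∃ i : ℕ, i :: n ∈ G.Node) → G.label n = a ∨ G.label n = b)
    (φ : Formula Agent PropVar) (n : List ℕ) (hn : n ∈ G.Node)
    (h : ¬ G.Win a (G.truth φ) n) :
    G.Win b (G.truth (.neg φ)) n := by
  exact G.win_two_agents_aux a b hab hlab (G.truth φ) (G.truth_subset_outcomes φ)
    ({x ∈ G.Node | n <:+ x}).ncard n le_rfl hn h
end

section
/- Let the agent set 𝒜 be finite and let G be an extensive form game in which every non-leaf node is labelled with one of two distinct agents a and b. Then for any formula φ ∈ Φ, if ⟦φ⟧ ≠ Ω(G), then ⟦G^{c,s}(φ)⟧ = ∅; that is, in every outcome where φ is true, some agent is either counterfactually responsible for φ or responsible for seeing to φ. -/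
namespace Game

variable {Agent PropVar : Type}

lemma suffix_mem_node (G : Game Agent PropVar) {w n : List ℕ} (hw : w ∈ G.Node)
    (h : n <:+ w) : n ∈ G.Node := by
  obtain ⟨s, rfl⟩ := h
  induction s with
  | nil => exact hw
  | cons x s ih => exact ih (G.downward x _ hw)

lemma truth_subset_outcomes_s4 (G : Game Agent PropVar) (φ : Formula Agent PropVar) :
    G.truth φ ⊆ G.outcomes := by
  induction φ with
  | var p => exact fun w hw => hw.1
  | neg φ ih => exact fun w hw => hw.1
  | and φ ψ ih1 ih2 => exact fun w hw => ih1 hw.1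
  | C a φ ih => exact fun w hw => ih hw.1
  | S a φ ih => exact fun w hw => hw.1

lemma outcome_of_leaf (G : Game Agent PropVar) {w u : List ℕ} (hw : G.IsOutcome w)
    (hu : u ∈ G.Node) (h : w <:+ u) : u = w := by
  obtain ⟨s, rfl⟩ := h
  induction s with
  | nil => rfl
  | cons x s ih =>
    have h2 : s ++ w ∈ G.Node := G.downward x (s ++ w) hu
    have h3 : s ++ w = w := ih h2
    have h4 : x :: w ∈ G.Node := by rw [← h3]; exact hu
    exact absurd h4 (hw.2 x)

lemma first_point (Q : List ℕ → Prop) : ∀ (w : List ℕ), Q w → ¬ Q [] →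
    ∃ i t, (i :: t) <:+ w ∧ ¬ Q t ∧ Q (i :: t) := by
  intro w
  induction w with
  | nil => intro h h'; exact absurd h h'
  | cons x w ih =>
    intro h h'
    by_cases hw : Q w
    · obtain ⟨i, t, hs, h1, h2⟩ := ih hw h'
      exact ⟨i, t, hs.trans (List.suffix_cons x w), h1, h2⟩
    · exact ⟨x, w, List.suffix_rfl, hw, h⟩

lemma determinacy (G : Game Agent PropVar) (a b : Agent) (hab : a ≠ b)
    (hlab : ∀ n ∈ G.Node, (∃ i : ℕ, i :: n ∈ G.Node) → G.label n = a ∨ G.label n = b)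
    (X : Set (List ℕ)) :
    ∀ n ∈ G.Node, G.Win a (G.outcomes \ X) n ∨ G.Win b X n := by
  classical
  set N := G.finite.toFinset.sup List.length with hN
  have hbound : ∀ m ∈ G.Node, m.length ≤ N :=
    fun m hm => Finset.le_sup (f := List.length) (G.finite.mem_toFinset.mpr hm)
  suffices h : ∀ k, ∀ n ∈ G.Node, N + 1 - n.length ≤ k →
      G.Win a (G.outcomes \ X) n ∨ G.Win b X n by
    intro n hn
    exact h (N + 1) n hn (by omega)
  intro k
  induction k with
  | zero =>
    intro n hn hk
    have := hbound n hn
    omega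
  | succ k ih =>
    intro n hn hk
    by_cases hleaf : ∃ i : ℕ, i :: n ∈ G.Node
    · have hchild : ∀ i : ℕ, i :: n ∈ G.Node →
          G.Win a (G.outcomes \ X) (i :: n) ∨ G.Win b X (i :: n) := by
        intro i hi
        apply ih _ hi
        have h1 := hbound (i :: n) hi
        have h2 := hbound n hn
        simp only [List.length_cons] at h1 ⊢
        omega
      rcases hlab n hn hleaf with hl | hl
      · by_cases hA : ∃ i : ℕ, i :: n ∈ G.Node ∧ G.Win a (G.outcomes \ X) (i :: n)
        · obtain ⟨i, hi, hwin⟩ := hA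
          exact Or.inl (Win.own n hn hl i hi hwin)
        · right
          apply Win.other n hn (by rw [hl]; exact hab) hleaf
          intro i hi
          rcases hchild i hi with h | h
          · exact absurd ⟨i, hi, h⟩ hA
          · exact h
      · by_cases hB : ∃ i : ℕ, i :: n ∈ G.Node ∧ G.Win b X (i :: n)
        · obtain ⟨i, hi, hwin⟩ := hB
          exact Or.inr (Win.own n hn hl i hi hwin)
        · left
          apply Win.other n hn (by rw [hl]; exact hab.symm) hleaf
          intro i hi
          rcases hchild i hi with h | h
          · exact h
          · exact absurd ⟨i, hi, h⟩ hB
    · push_neg at hleaf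
      have hout : n ∈ G.outcomes := ⟨hn, hleaf⟩
      by_cases hx : n ∈ X
      · exact Or.inr (Win.mem n hx)
      · exact Or.inl (Win.mem n ⟨hout, hx⟩)

end Game

/-- in a two-agent extensive form game between agents `a` and `b`,
for any formula `φ` with `⟦φ⟧ ≠ Ω(G)`, the truth set of the combined gap formula
`G^{c,s}(φ)` is empty. -/
theorem no_gap_two_agents {Agent PropVar : Type} [Fintype Agent]
    (G : Game Agent PropVar) (a b : Agent) (hab : a ≠ b)
    (hlab : ∀ n ∈ G.Node, (∃ i : ℕ, i :: n ∈ G.Node) → G.label n = a ∨ G.label n = b)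
    (φ : Formula Agent PropVar) (hφ : G.truth φ ≠ G.outcomes) :
    G.gapCSIter φ 1 = ∅ := by
  classical
  rw [Set.eq_empty_iff_forall_notMem]
  intro w hw
  simp only [Game.gapCSIter, Set.mem_inter_iff, Set.mem_iInter, Set.mem_diff] at hw
  obtain ⟨⟨hwX, hC⟩, hS⟩ := hw
  set X := G.truth φ with hXdef
  have hwo : w ∈ G.outcomes := G.truth_subset_outcomes_s4 φ hwX
  have hnode : w ∈ G.Node := hwo.1
  -- no ancestor is a winning node for the complement, for either agent
  have hnC : ∀ c : Agent, ∀ n, n <:+ w → ¬ G.Win c (G.outcomes \ X) n := by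
    intro c n hn hwin
    exact (hC c).2 ⟨hwX, n, hn, hwin⟩
  -- every ancestor is a winning node for X, for both agents
  have hwinA : ∀ n, n <:+ w → G.Win a X n := by
    intro n hn
    rcases G.determinacy b a hab.symm (fun m hm h => (hlab m hm h).symm) X n
      (G.suffix_mem_node hnode hn) with h | h
    · exact absurd h (hnC b n hn)
    · exact h
  have hwinB : ∀ n, n <:+ w → G.Win b X n := by
    intro n hn
    rcases G.determinacy a b hab hlab X n (G.suffix_mem_node hnode hn) with h | h
    · exact absurd h (hnC a n hn)
    · exact h
  -- find an achievement point on the path to w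
  have hQw : ∀ u ∈ G.outcomes, w <:+ u → u ∈ X := by
    intro u hu hsuf
    rw [G.outcome_of_leaf hwo hu.1 hsuf]
    exact hwX
  have hQnil : ¬ ∀ u ∈ G.outcomes, [] <:+ u → u ∈ X := by
    intro h
    have hsub : G.outcomes ⊆ X := fun u hu => h u hu (List.nil_suffix)
    exact hφ (Set.Subset.antisymm (G.truth_subset_outcomes_s4 φ) hsub)
  obtain ⟨i, t, hst, hQt, hQit⟩ :=
    Game.first_point (fun t => ∀ u ∈ G.outcomes, t <:+ u → u ∈ X) w hQw hQnil
  push_neg at hQt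
  have hitNode : i :: t ∈ G.Node := G.suffix_mem_node hnode hst
  have htNode : t ∈ G.Node := G.downward i t hitNode
  have hach : ∀ c : Agent, G.label t = c → G.AchievePoint X c (i :: t) :=
    fun c hc => ⟨i, t, rfl, hitNode, hc, hQt, hQit⟩
  rcases hlab t htNode ⟨i, hitNode⟩ with hl | hl
  · exact (hS a).2 ⟨hwo, hwinA, i :: t, hach a hl, hst⟩
  · exact (hS b).2 ⟨hwo, hwinB, i :: t, hach b hl, hst⟩
end

section
/- For any formula φ ∈ Φ, any integer i ≥ 0, and any extensive form game G, if ∅ ⊊ ⟦G^c_i(φ)⟧ ⊊ Ω(G), then ⟦G^c_{i+1}(φ)⟧ ⊊ ⟦G^c_i(φ)⟧ (a strict inclusion). -/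
/-! Pick an outcome in `X` and one outside it and follow the path from the root towards the
second as long as both outcomes stay below the current node. At the last branching node `n`,
some child has no `X`-outcome below it, so the agent who moves at `n` can force `Ω ∖ X` from
`n`; hence every `X`-outcome below `n` is in `C_a X` and the gap formula loses it. -/

theorem List.exists_cons_suffix_of_suffix {α : Type*} {t w : List α} (h : t <:+ w)
    (hne : t ≠ w) :
    ∃ i, i :: t <:+ w := by
  obtain ⟨l, rfl⟩ := h
  rcases List.eq_nil_or_concat l with rfl | ⟨l', i, rfl⟩
  · exact absurd rfl hne
  · exact ⟨i, l', by simp⟩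

namespace Game

variable {Agent PropVar : Type} (G : Game Agent PropVar)

theorem mem_node_of_suffix {t w : List ℕ} (ht : t <:+ w) (hw : w ∈ G.Node) : t ∈ G.Node := by
  obtain ⟨l, rfl⟩ := ht
  induction l with
  | nil => exact hw
  | cons i l ih => exact ih (G.downward i _ hw)

theorem exists_child_suffix {m w : List ℕ} (hm : m <:+ w) (hw : w ∈ G.Node) (hne : w ≠ m) :
    ∃ i, i :: m ∈ G.Node ∧ i :: m <:+ w :=
  let ⟨i, hi⟩ := List.exists_cons_suffix_of_suffix hm hne.symm
  ⟨i, G.mem_node_of_suffix hi hw, hi⟩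

theorem IsOutcome.eq_of_suffix {G : Game Agent PropVar} {m w : List ℕ} (hm : G.IsOutcome m)
    (hmw : m <:+ w) (hw : w ∈ G.Node) : w = m := by
  by_contra hne
  obtain ⟨i, hi, -⟩ := G.exists_child_suffix hmw hw hne
  exact hm.2 i hi

theorem exists_length_bound : ∃ N, ∀ n ∈ G.Node, n.length ≤ N :=
  (G.finite.image List.length).bddAbove.imp fun _ hN _ hn => hN ⟨_, hn, rfl⟩

theorem induction_from_leaves {P : List ℕ → Prop}
    (step : ∀ m ∈ G.Node, (∀ i, i :: m ∈ G.Node → P (i :: m)) → P m) :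
    ∀ m ∈ G.Node, P m := by
  obtain ⟨N, hN⟩ := G.exists_length_bound
  intro m hm
  induction hk : N - m.length using Nat.strong_induction_on generalizing m with
  | _ k ih =>
    subst hk
    refine step m hm fun i hi => ih _ ?_ _ hi rfl
    have := hN _ hi
    simp only [List.length_cons] at this ⊢
    omega

theorem win_of_forall_outcome_mem (a : Agent) (Y : Set (List ℕ)) :
    ∀ m ∈ G.Node, (∀ w ∈ G.outcomes, m <:+ w → w ∈ Y) → G.Win a Y m := by
  refine G.induction_from_leaves fun m hm ih hY => ?_
  have hchild : ∀ i, i :: m ∈ G.Node → G.Win a Y (i :: m) := fun i hi =>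
    ih i hi fun w hw hiw => hY w hw ((List.suffix_cons i m).trans hiw)
  by_cases hleaf : ∃ i, i :: m ∈ G.Node
  · by_cases hlabel : G.label m = a
    · obtain ⟨i, hi⟩ := hleaf
      exact .own m hm hlabel i hi (hchild i hi)
    · exact .other m hm hlabel hleaf hchild
  · have hout : G.IsOutcome m := ⟨hm, fun i hi => hleaf ⟨i, hi⟩⟩
    exact .mem m (hY m hout List.suffix_rfl)

theorem exists_branching_node (X : Set (List ℕ)) :
    ∀ m ∈ G.Node, (∃ w ∈ G.outcomes, m <:+ w ∧ w ∈ X) →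
      (∃ w ∈ G.outcomes, m <:+ w ∧ w ∉ X) →
      ∃ n, (∃ w ∈ G.outcomes, n <:+ w ∧ w ∈ X) ∧
        ∃ i, i :: n ∈ G.Node ∧ ∀ w ∈ G.outcomes, i :: n <:+ w → w ∉ X := by
  refine G.induction_from_leaves fun m _ ih hmemX hnotX => ?_
  obtain ⟨w₀, hw₀, hmw₀, hw₀X⟩ := hnotX
  have hw₀m : w₀ ≠ m := by
    rintro rfl
    obtain ⟨w₁, hw₁, hmw₁, hw₁X⟩ := hmemX
    exact hw₀X (hw₀.eq_of_suffix hmw₁ hw₁.1 ▸ hw₁X)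
  obtain ⟨i, hi, hiw₀⟩ := G.exists_child_suffix hmw₀ hw₀.1 hw₀m
  by_cases hpure : ∀ w ∈ G.outcomes, i :: m <:+ w → w ∉ X
  · exact ⟨m, hmemX, i, hi, hpure⟩
  · push Not at hpure
    exact ih i hi hpure ⟨w₀, hw₀, hiw₀, hw₀X⟩

theorem exists_Cset_nonempty {X : Set (List ℕ)} {w₁ w₀ : List ℕ}
    (hw₁ : w₁ ∈ G.outcomes) (hw₁X : w₁ ∈ X) (hw₀ : w₀ ∈ G.outcomes) (hw₀X : w₀ ∉ X) :
    ∃ a, (G.Cset a X).Nonempty := by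
  obtain ⟨n, ⟨w, -, hnw, hwX⟩, i, hi, hpure⟩ :=
    G.exists_branching_node X [] G.root_mem ⟨w₁, hw₁, List.nil_suffix, hw₁X⟩
      ⟨w₀, hw₀, List.nil_suffix, hw₀X⟩
  have hwin : G.Win (G.label n) (G.outcomes \ X) n :=
    .own n (G.downward i n hi) rfl i hi <|
      G.win_of_forall_outcome_mem _ _ _ hi fun v hv hiv => ⟨hv, hpure v hv hiv⟩
  exact ⟨G.label n, w, hwX, n, hnw, hwin⟩

end Game

theorem gapC_strict_decrease_general {Agent PropVar : Type}
    (G : Game Agent PropVar) (φ : Formula Agent PropVar) (i : ℕ)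
    (h1 : (∅ : Set (List ℕ)) ⊂ G.gapCIter φ i)
    (h2 : G.gapCIter φ i ⊂ G.outcomes) :
    G.gapCIter φ (i + 1) ⊂ G.gapCIter φ i := by
  obtain ⟨w₁, hw₁⟩ := Set.empty_ssubset.mp h1
  obtain ⟨w₀, hw₀, hw₀X⟩ := Set.exists_of_ssubset h2
  obtain ⟨a, w, hwX, hwC⟩ := G.exists_Cset_nonempty (h2.1 hw₁) hw₁ hw₀ hw₀X
  refine (Set.ssubset_iff_of_subset Set.inter_subset_left).mpr ⟨w, hwX, fun hw => ?_⟩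
  exact (Set.mem_iInter.mp hw.2 a).2 ⟨hwX, hwC⟩

/-- if `∅ ⊊ ⟦G^c_i(φ)⟧ ⊊ Ω(G)`, then `⟦G^c_{i+1}(φ)⟧ ⊊ ⟦G^c_i(φ)⟧`. -/
theorem gapC_strict_decrease {Agent PropVar : Type} [Fintype Agent]
    (G : Game Agent PropVar) (φ : Formula Agent PropVar) (i : ℕ)
    (h1 : (∅ : Set (List ℕ)) ⊂ G.gapCIter φ i)
    (h2 : G.gapCIter φ i ⊂ G.outcomes) :
    G.gapCIter φ (i + 1) ⊂ G.gapCIter φ i :=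
  gapC_strict_decrease_general G φ i h1 h2
end

section
/- For any formula φ ∈ Φ and any agent a ∈ 𝒜, the formulae C_a C_a φ and C_a φ are semantically equivalent: ⟦C_a C_a φ⟧ = ⟦C_a φ⟧ in every extensive form game. -/
lemma win_mono {Agent PropVar : Type} {G : Game Agent PropVar} {a : Agent}
    {X Y : Set (List ℕ)} (hXY : X ⊆ Y) {n : List ℕ} (h : G.Win a X n) : G.Win a Y n := by
  induction h with
  | mem w hw => exact .mem w (hXY hw)
  | own n hn hl i hi h ih => exact .own n hn hl i hi ih
  | other n hn hl hne h ih => exact .other n hn hl hne ih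

/-- `C_a C_a φ` and `C_a φ` are semantically equivalent. -/
theorem CC_eq_C {Agent PropVar : Type} (φ : Formula Agent PropVar) (a : Agent) :
    ∀ G : Game Agent PropVar, G.truth (.C a (.C a φ)) = G.truth (.C a φ) := by
  intro G
  ext w
  show w ∈ G.Cset a (G.Cset a (G.truth φ)) ↔ w ∈ G.Cset a (G.truth φ)
  constructor
  · rintro ⟨hw, -⟩
    exact hw
  · intro hw
    refine ⟨hw, ?_⟩
    obtain ⟨-, n, hn, hwin⟩ := hw
    refine ⟨n, hn, win_mono ?_ hwin⟩
    rintro x ⟨hx1, hx2⟩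
    exact ⟨hx1, fun hc => hx2 hc.1⟩
end

section
/- For any extensive form game G, any outcomes w and w', any formula φ ∈ Φ, any agent a, and any node n that is a ⟦φ⟧-achievement point by some agent, if w ∈ ⟦S_a φ⟧, w ⪯ n, and w' ⪯ n, then w' ∈ ⟦S_a φ⟧. -/
/-- Suffixes of nodes are nodes. -/
lemma node_of_suffix {Agent PropVar : Type} (G : Game Agent PropVar)
    {m v : List ℕ} (h : m <:+ v) (hv : v ∈ G.Node) : m ∈ G.Node := by
  obtain ⟨t, rfl⟩ := h
  induction t with
  | nil => simpa using hv
  | cons i t ih => exact ih (G.downward i _ hv)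

/-- If every outcome below `m` is in `X`, then `m ∈ win_a(X)`. -/
lemma win_of_all_outcomes {Agent PropVar : Type} (G : Game Agent PropVar)
    (a : Agent) (X : Set (List ℕ)) {m : List ℕ} (hm : m ∈ G.Node)
    (h : ∀ w ∈ G.outcomes, m <:+ w → w ∈ X) : G.Win a X m := by
  obtain ⟨N, hN⟩ : ∃ N, ∀ x ∈ G.Node, x.length ≤ N := by
    obtain ⟨s, hs⟩ := G.finite.exists_finset_coe
    refine ⟨s.sup List.length, fun x hx => ?_⟩
    exact Finset.le_sup (by simpa [← hs] using hx)
  suffices H : ∀ k, ∀ m ∈ G.Node, N - m.length ≤ k →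
      (∀ w ∈ G.outcomes, m <:+ w → w ∈ X) → G.Win a X m from
    H N m hm (Nat.sub_le _ _) h
  clear hm h m
  intro k
  induction k with
  | zero =>
    intro m hm hk h
    have hlen : N ≤ m.length := Nat.le_of_sub_eq_zero (Nat.le_zero.mp hk)
    have hleaf : ∀ i : ℕ, i :: m ∉ G.Node := by
      intro i hi
      have := hN _ hi
      simp [List.length_cons] at this
      omega
    exact .mem m (h m ⟨hm, hleaf⟩ (List.suffix_refl m))
  | succ k ih =>
    intro m hm hk h
    by_cases hleaf : ∀ i : ℕ, i :: m ∉ G.Node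
    · exact .mem m (h m ⟨hm, hleaf⟩ (List.suffix_refl m))
    · push_neg at hleaf
      obtain ⟨i, hi⟩ := hleaf
      have hmlt : m.length < N := by
        have := hN _ hi; simp [List.length_cons] at this; omega
      have hchild : ∀ j : ℕ, j :: m ∈ G.Node → G.Win a X (j :: m) := by
        intro j hj
        refine ih (j :: m) hj (by simp [List.length_cons]; omega) ?_
        intro v hv hsuf
        exact h v hv ((List.suffix_cons j m).trans hsuf)
      by_cases hl : G.label m = a
      · exact .own m hm hl i hi (hchild i hi)
      · exact .other m hm hl ⟨i, hi⟩ hchild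

/-- for any outcomes `w`, `w'`, any formula `φ`, any agent `a`, and
any node `n` that is a `⟦φ⟧`-achievement point by some agent, if `w ∈ ⟦S_a φ⟧`,
`w ⪯ n`, and `w' ⪯ n`, then `w' ∈ ⟦S_a φ⟧`. -/
theorem S_truth_of_achievement {Agent PropVar : Type} (G : Game Agent PropVar)
    (w w' : List ℕ) (hw : w ∈ G.outcomes) (hw' : w' ∈ G.outcomes)
    (φ : Formula Agent PropVar) (a : Agent) (n : List ℕ)
    (hn : ∃ g : Agent, G.AchievePoint (G.truth φ) g n)
    (hSw : w ∈ G.truth (.S a φ)) (h1 : n <:+ w) (h2 : n <:+ w') :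
    w' ∈ G.truth (.S a φ) := by
  obtain ⟨g, hach⟩ := hn
  obtain ⟨i, t, rfl, hnNode, hlab, hbad, hgood⟩ := hach
  obtain ⟨hwout, hwin, n₀, hap₀, hn₀w⟩ := hSw
  refine ⟨hw', ?_, ?_⟩
  · intro m hm
    rcases List.suffix_or_suffix_of_suffix hm h2 with hmn | hnm
    · exact hwin m (hmn.trans h1)
    · refine win_of_all_outcomes G a _ (node_of_suffix G hm hw'.1) ?_
      intro v hv hsuf
      exact hgood v hv (hnm.trans hsuf)
  · -- the achievement point n₀ by a satisfies n₀ <:+ n, hence n₀ <:+ w'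
    refine ⟨n₀, hap₀, ?_⟩
    rcases List.suffix_or_suffix_of_suffix hn₀w h1 with h0n | hn0
    · exact h0n.trans h2
    · -- n <:+ n₀ : either n₀ = n, or n <:+ parent(n₀), contradiction
      obtain ⟨j, t₀, rfl, _, _, ⟨v, hvout, hvt, hvX⟩, _⟩ := hap₀
      rcases List.suffix_cons_iff.mp hn0 with heq | ht₀
      · exact heq ▸ h2
      · exact absurd (hgood v hvout (ht₀.trans hvt)) hvX
end

section
/- Suppose the agent set contains at least two distinct agents and the set of propositional variables contains a variable p. Then the formulae S_a S_a p and S_a p are not semantically equivalent: there exists an extensive form game G (namely a two-step game in which agent b moves first and agent a moves second) and an agent a such that ⟦S_a S_a p⟧ ≠ ⟦S_a p⟧ in G. -/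
section Demo

variable {Agent PropVar : Type}

/-- The counterexample game: `b` moves at the root (children `[0]`, `[1]`),
`a` moves at `[0]` (children `[0,0]` with `p` and `[1,0]` without `p`),
and `[1]` is a leaf labelled with `p`. -/
def demoGame (a b : Agent) (p : PropVar) : Game Agent PropVar where
  Node := {[], [0], [1], [0, 0], [1, 0]}
  root_mem := by simp
  downward := by
    intro i t h
    simp only [Set.mem_insert_iff, Set.mem_singleton_iff] at h ⊢
    rcases h with h | h | h | h | h <;> simp_all
  finite := (Set.finite_singleton _).insert _ |>.insert _ |>.insert _ |>.insert _
  label := fun n => if n = [0] then a else b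
  leafLabel := fun w => if w = [1, 0] then ∅ else {p}

variable (a b : Agent) (p : PropVar)

lemma demo_node_iff (w : List ℕ) :
    w ∈ (demoGame a b p : Game Agent PropVar).Node ↔
      w = [] ∨ w = [0] ∨ w = [1] ∨ w = [0, 0] ∨ w = [1, 0] := by
  simp [demoGame, Set.mem_insert_iff]

lemma demo_outcomes :
    (demoGame a b p : Game Agent PropVar).outcomes = {[0, 0], [1, 0], [1]} := by
  ext w
  constructor
  · rintro ⟨hw, hleaf⟩
    rw [demo_node_iff] at hw
    rcases hw with rfl | rfl | rfl | rfl | rfl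
    · exact absurd ((demo_node_iff a b p [0]).2 (by simp)) (hleaf 0)
    · exact absurd ((demo_node_iff a b p [0, 0]).2 (by simp)) (hleaf 0)
    · simp
    · simp
    · simp
  · intro hw
    simp only [Set.mem_insert_iff, Set.mem_singleton_iff] at hw
    rcases hw with rfl | rfl | rfl <;>
      exact ⟨(demo_node_iff a b p _).2 (by simp), fun i hi => by
        rw [demo_node_iff] at hi; simp at hi⟩

lemma demo_truth_p :
    (demoGame a b p : Game Agent PropVar).truth (.var p) = {[0, 0], [1]} := by
  ext w
  simp only [Game.truth, Set.mem_setOf_eq, demo_outcomes]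
  constructor
  · rintro ⟨hw, hp⟩
    simp only [Set.mem_insert_iff, Set.mem_singleton_iff] at hw ⊢
    rcases hw with rfl | rfl | rfl
    · left; rfl
    · exact absurd hp (by simp [demoGame])
    · right; rfl
  · intro hw
    simp only [Set.mem_insert_iff, Set.mem_singleton_iff] at hw
    rcases hw with rfl | rfl <;> exact ⟨by simp, by simp [demoGame]⟩

lemma leaf_not_win {G : Game Agent PropVar} {a : Agent} {X : Set (List ℕ)}
    {w : List ℕ} (hleaf : ∀ i : ℕ, i :: w ∉ G.Node) (hX : w ∉ X) :
    ¬ G.Win a X w := by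
  intro h
  cases h with
  | mem _ hw => exact hX hw
  | own _ _ _ i hi _ => exact hleaf i hi
  | other _ _ _ hne _ => exact hne.elim fun i hi => hleaf i hi

lemma demo_leaf10 (i : ℕ) : i :: [1, 0] ∉ (demoGame a b p : Game Agent PropVar).Node := by
  rw [demo_node_iff]; simp

lemma demo_leaf1 (i : ℕ) : i :: [1] ∉ (demoGame a b p : Game Agent PropVar).Node := by
  rw [demo_node_iff]; simp

/-- `[0,0]` satisfies `S_a p` in the demo game. -/
lemma demo_mem_Sp (hab : a ≠ b) :
    [0, 0] ∈ (demoGame a b p : Game Agent PropVar).truth (.S a (.var p)) := by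
  set G : Game Agent PropVar := demoGame a b p with hG
  have hp : G.truth (.var p) = {[0, 0], [1]} := demo_truth_p a b p
  have hout : G.outcomes = {[0, 0], [1, 0], [1]} := demo_outcomes a b p
  have hwin00 : G.Win a (G.truth (.var p)) [0, 0] := .mem _ (by rw [hp]; simp)
  have hwin1 : G.Win a (G.truth (.var p)) [1] := .mem _ (by rw [hp]; simp)
  have hwin0 : G.Win a (G.truth (.var p)) [0] :=
    .own [0] ((demo_node_iff a b p [0]).2 (by simp)) (by simp [hG, demoGame]) 0
      ((demo_node_iff a b p [0, 0]).2 (by simp)) hwin00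
  have hwinroot : G.Win a (G.truth (.var p)) [] := by
    refine .other [] G.root_mem ?_ ⟨0, (demo_node_iff a b p [0]).2 (by simp)⟩ ?_
    · simp [hG, demoGame, hab.symm]
    · intro i hi
      rw [demo_node_iff] at hi
      rcases hi with h | h | h | h | h
      · exact absurd h (by simp)
      · obtain rfl : i = 0 := by simpa using h
        exact hwin0
      · obtain rfl : i = 1 := by simpa using h
        exact hwin1
      · exact absurd h (by simp)
      · exact absurd h (by simp)
  refine ⟨by rw [hout]; simp, ?_, ?_⟩
  · intro n hn
    rcases List.suffix_cons_iff.1 hn with rfl | hn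
    · exact hwin00
    rcases List.suffix_cons_iff.1 hn with rfl | hn
    · exact hwin0
    · rw [List.suffix_nil.1 hn]; exact hwinroot
  · refine ⟨[0, 0], ⟨0, [0], rfl, (demo_node_iff a b p [0, 0]).2 (by simp),
      by simp [hG, demoGame], ⟨[1, 0], by rw [hout]; simp, ⟨[1], rfl⟩, ?_⟩, ?_⟩,
      List.suffix_refl _⟩
    · rw [hp]; simp
    · intro w hw hsuf
      rw [hout] at hw
      simp only [Set.mem_insert_iff, Set.mem_singleton_iff] at hw
      rcases hw with rfl | rfl | rfl
      · rw [hp]; simp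
      · exact absurd hsuf (by decide)
      · exact absurd hsuf (by decide)

/-- `[1]` does not satisfy `S_a p` in the demo game. -/
lemma demo_not_mem_Sp_one (hab : a ≠ b) :
    [1] ∉ (demoGame a b p : Game Agent PropVar).truth (.S a (.var p)) := by
  rintro ⟨-, -, n, ⟨i, t, rfl, -, hlab, -, -⟩, hsuf⟩
  rcases List.suffix_cons_iff.1 hsuf with h | h
  · obtain ⟨rfl, rfl⟩ : i = 1 ∧ t = [] := by simpa using h
    simp only [demoGame] at hlab
    exact hab (by simpa using hlab.symm)
  · exact absurd (List.suffix_nil.1 h) (by simp)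

/-- `[1,0]` does not satisfy `S_a p` in the demo game. -/
lemma demo_not_mem_Sp_ten :
    [1, 0] ∉ (demoGame a b p : Game Agent PropVar).truth (.S a (.var p)) := by
  rintro ⟨-, hwin, -⟩
  exact leaf_not_win (demo_leaf10 a b p)
    (by rw [demo_truth_p]; simp) (hwin [1, 0] (List.suffix_refl _))

end Demo

/-- if the agent set contains two distinct agents `a`, `b` and there
is a propositional variable `p`, then `S_a S_a p` and `S_a p` are not semantically
equivalent: in some extensive form game their truth sets differ. -/
theorem SS_not_equiv_S {Agent PropVar : Type} (a b : Agent) (hab : a ≠ b)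
    (p : PropVar) :
    ∃ G : Game Agent PropVar,
      G.truth (.S a (.S a (.var p))) ≠ G.truth (.S a (.var p)) := by
  refine ⟨demoGame a b p, fun h => ?_⟩
  set G : Game Agent PropVar := demoGame a b p with hG
  have h00 : [0, 0] ∈ G.truth (.S a (.var p)) := demo_mem_Sp a b p hab
  rw [← h] at h00
  obtain ⟨-, hwin, -⟩ : [0, 0] ∈ G.Sset a (G.truth (.S a (.var p))) := h00
  have hroot : G.Win a (G.truth (.S a (.var p))) [] :=
    hwin [] ⟨[0, 0], by simp⟩
  cases hroot with
  | mem _ hw =>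
    obtain ⟨⟨-, hleaf⟩, -⟩ := hw
    exact hleaf 0 ((demo_node_iff a b p [0]).2 (by simp))
  | own _ _ hl _ _ _ =>
    have hba : b = a := by simpa [hG, demoGame] using hl
    exact hab hba.symm
  | other _ _ _ _ hall =>
    exact leaf_not_win (demo_leaf1 a b p) (demo_not_mem_Sp_one a b p hab)
      (hall 1 ((demo_node_iff a b p [1]).2 (by simp)))
end
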